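/- If every clause C_q of φ contains at least one literal (and is hence made true by at least one truth assignment), then all m = 1 + log₂ r + 2s rows of the constructed matrix A are pairwise distinct, so (A, k) is a valid instance of Distinct Vectors. -/

import Mathlib

/-!
The construction of the paper.  Rows and columns are 0-indexed here:
* `r ≥ 2` is a power of two, the number of variables of the CNF formula `φ`;
  variables are elements of `Fin r`; a literal is a variable plus a polarity.
* `s = 2 ^ ℓ - 1` (with `ℓ ≥ 1`) is the number of clauses; clause `q : Fin s`
  is the finite set `Clause q` of literals.
* `L = log₂ r` is the number of bundles; bundle `i` is a list `B i` of exactly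
  `r' = ⌈r / log₂ r⌉` variables (with repetitions allowed), and every variable
  occurs in exactly one bundle.
* For every bundle `i` there is a list of `ρ = 2 ^ r'` truth assignments
  `asg i p : Fin r → Bool` (`p : Fin ρ`, only the values on `B i`'s variables are
  relevant) containing every assignment of `B i`'s variables at least once.
* The matrix `A` has `n = ℓ + ρ * L` columns: the `ℓ` consistency columns
  `0, …, ℓ - 1`, followed, for each bundle `i`, by `B i`'s columns
  `ℓ + i * ρ, …, ℓ + (i + 1) * ρ - 1` (the `p`-th corresponding to assignment `p`).
* The matrix `A` has `m = 1 + L + 2 * s` rows: the all-zero row `0`, the bundle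
  indicator rows `1, …, L` (row `i + 1` is `1` exactly on bundle `i`'s columns),
  and, for each clause `q : Fin s`, the odd row `1 + L + 2 * q` (the `ℓ`-bit binary
  encoding of `q + 1` on the consistency columns and `sat_i(p, q)` on the `p`-th of
  bundle `i`'s columns) and the even row `1 + L + 2 * q + 1` (the encoding of `q + 1`
  on the consistency columns and `0` elsewhere).
* `k = ℓ + L`.  A solution is a set `K` of at most `k` columns such that the rows
  of `A` restricted to the columns in `K` are pairwise distinct.
-/

/-- A literal over variables `Fin r`: a variable together with a polarity. -/
structure DVLit (r : ℕ) where
  var : Fin r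
  pos : Bool
deriving DecidableEq

/-- All the data of the construction: the CNF formula `φ` (variables, clauses),
the bundles, and the lists of truth assignments of each bundle. -/
structure DVInstance where
  /-- number of variables -/
  r : ℕ
  hr : 2 ≤ r
  hrpow : ∃ t : ℕ, r = 2 ^ t
  ℓ : ℕ
  hℓ : 1 ≤ ℓ
  /-- number of clauses -/
  s : ℕ
  hs : s = 2 ^ ℓ - 1
  /-- the clauses of `φ` -/
  Clause : Fin s → Finset (DVLit r)
  /-- the bundles: lists of variables of length `r' = ⌈r / log₂ r⌉` -/
  B : Fin (Nat.log 2 r) → List (Fin r)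
  hBlen : ∀ i, (B i).length = (r + Nat.log 2 r - 1) / Nat.log 2 r
  /-- every variable occurs in exactly one bundle -/
  hBpart : ∀ v : Fin r, ∃! i, v ∈ B i
  /-- the list of `ρ = 2 ^ r'` truth assignments of each bundle -/
  asg : Fin (Nat.log 2 r) → Fin (2 ^ ((r + Nat.log 2 r - 1) / Nat.log 2 r)) →
    Fin r → Bool
  /-- every assignment of a bundle's variables occurs at least once in its list -/
  hasg : ∀ i, ∀ β : Fin r → Bool, ∃ p, ∀ v ∈ B i, asg i p v = β v

namespace DVInstance

variable (D : DVInstance)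

/-- `L = log₂ r`, the number of bundles. -/
def L : ℕ := Nat.log 2 D.r

/-- `r' = ⌈r / log₂ r⌉`, the size of each bundle. -/
def r' : ℕ := (D.r + D.L - 1) / D.L

/-- `ρ = 2 ^ r'`, the number of columns of each bundle. -/
def ρ : ℕ := 2 ^ D.r'

/-- the number `n = log₂(s + 1) + ρ * log₂ r` of columns of `A`. -/
def n : ℕ := D.ℓ + D.ρ * D.L

/-- the number `m = 1 + log₂ r + 2 * s` of rows of `A`. -/
def m : ℕ := 1 + D.L + 2 * D.s

/-- the budget `k = log₂(s + 1) + log₂ r`. -/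
def k : ℕ := D.ℓ + D.L

/-- `sat_i(p, q)`: whether the `p`-th assignment of bundle `i` makes clause `q` true,
i.e. whether some literal of clause `q` whose variable belongs to bundle `i` is set
to its polarity by the `p`-th assignment of bundle `i` (nat-indexed version;
`false` outside the index ranges). -/
def satN (i p q : ℕ) : Bool :=
  if h : i < D.L ∧ p < D.ρ ∧ q < D.s then
    decide (∃ lit ∈ D.Clause ⟨q, h.2.2⟩, lit.var ∈ D.B ⟨i, h.1⟩ ∧
      D.asg ⟨i, h.1⟩ ⟨p, h.2.1⟩ lit.var = lit.pos)
  else false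

/-- The constructed binary matrix `A` (rows and columns 0-indexed;
entries outside the `m × n` range are irrelevant). -/
def A (row col : ℕ) : Bool :=
  if row = 0 then
    -- the all-zero row
    false
  else if row ≤ D.L then
    -- bundle indicator rows: row `i + 1` is `1` exactly on bundle `i`'s columns
    decide (D.ℓ + (row - 1) * D.ρ ≤ col ∧ col < D.ℓ + row * D.ρ)
  else if col < D.ℓ then
    -- clause rows on the consistency columns: the binary encoding of the
    -- (1-indexed) clause number
    Nat.testBit ((row - D.L - 1) / 2 + 1) col
  else if (row - D.L - 1) % 2 = 0 then
    -- odd row of clause `q = (row - L - 1) / 2`: `sat_i(p, q)` on the `p`-th of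
    -- bundle `i`'s columns
    D.satN ((col - D.ℓ) / D.ρ) ((col - D.ℓ) % D.ρ) ((row - D.L - 1) / 2)
  else
    -- even row of clause `q`: zero outside the consistency columns
    false

/-- `K` is a solution for the instance `(A, k)`: a set of at most `k` columns of `A`
such that the rows of `A` restricted to the columns in `K` are pairwise distinct. -/
def Solution (K : Finset ℕ) : Prop :=
  (∀ c ∈ K, c < D.n) ∧ K.card ≤ D.k ∧
    ∀ i j, i < D.m → j < D.m → i ≠ j → ∃ c ∈ K, D.A i c ≠ D.A j c

end DVInstance

/-!
Rows are told apart by the consistency columns unless they encode the same clause number, where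
the bundle rows and the all-zero row count as encoding `0`. Among the rows `0, …, L` the bundle
indicator of the larger row separates them. The odd and even row of a clause `q` differ in the
column of a bundle assignment setting some literal of `q` to its polarity: it satisfies `q`, so
the odd row has a `1` there.
-/

theorem Nat.exists_testBit_ne_of_lt_two_pow {ℓ a b : ℕ} (ha : a < 2 ^ ℓ) (hb : b < 2 ^ ℓ)
    (hab : a ≠ b) : ∃ c < ℓ, a.testBit c ≠ b.testBit c := by
  by_contra! h
  refine hab (Nat.eq_of_testBit_eq fun c => ?_)
  rcases lt_or_ge c ℓ with hc | hc
  · exact h c hc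
  · have hpow : 2 ^ ℓ ≤ 2 ^ c := Nat.pow_le_pow_right two_pos hc
    rw [Nat.testBit_eq_false_of_lt (ha.trans_le hpow), Nat.testBit_eq_false_of_lt (hb.trans_le hpow)]

namespace DVInstance

variable (D : DVInstance)

theorem ρ_pos : 0 < D.ρ := Nat.two_pow_pos _

/-- The number a row carries on the consistency columns. -/
def code (row : ℕ) : ℕ := if row ≤ D.L then 0 else (row - D.L - 1) / 2 + 1

theorem code_lt_two_pow {row : ℕ} (hrow : row < D.m) : D.code row < 2 ^ D.ℓ := by
  have hs := D.hs
  have hpos : 1 ≤ 2 ^ D.ℓ := Nat.one_le_two_pow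
  unfold code
  unfold m at hrow
  split_ifs <;> omega

theorem A_of_lt_ℓ (row : ℕ) {c : ℕ} (hc : c < D.ℓ) : D.A row c = (D.code row).testBit c := by
  unfold A code
  split_ifs <;> simp_all
  omega

theorem A_of_le_L {row c : ℕ} (hrow : row ≤ D.L) (hc : D.ℓ ≤ c) :
    D.A row c = decide ((c - D.ℓ) / D.ρ + 1 = row) := by
  have hρ := D.ρ_pos
  unfold A
  split_ifs with h0
  · simp [h0]
  · have hdiv := Nat.div_eq_iff (x := c - D.ℓ) (y := row - 1) hρ
    obtain ⟨t, rfl⟩ : ∃ t, row = t + 1 := ⟨row - 1, by omega⟩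
    rw [Nat.add_sub_cancel] at hdiv ⊢
    rw [Nat.add_one_mul, decide_eq_decide]
    omega

theorem A_odd_row (q : ℕ) {c : ℕ} (hc : D.ℓ ≤ c) :
    D.A (1 + D.L + 2 * q) c = D.satN ((c - D.ℓ) / D.ρ) ((c - D.ℓ) % D.ρ) q := by
  unfold A
  rw [if_neg (by omega), if_neg (by omega), if_neg (by omega), if_pos (by omega)]
  congr 1
  omega

theorem A_even_row (q : ℕ) {c : ℕ} (hc : D.ℓ ≤ c) : D.A (1 + D.L + 2 * q + 1) c = false := by
  unfold A
  rw [if_neg (by omega), if_neg (by omega), if_neg (by omega), if_neg (by omega)]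

def bundleCol (i p : ℕ) : ℕ := D.ℓ + (i * D.ρ + p)

theorem bundleCol_lt_n {i p : ℕ} (hi : i < D.L) (hp : p < D.ρ) : D.bundleCol i p < D.n := by
  have : i * D.ρ + p < D.ρ * D.L := by nlinarith
  unfold bundleCol n
  omega

theorem bundleCol_sub_div {i p : ℕ} (hp : p < D.ρ) : (D.bundleCol i p - D.ℓ) / D.ρ = i := by
  rw [bundleCol, Nat.add_sub_cancel_left, Nat.mul_comm, Nat.mul_add_div D.ρ_pos,
    Nat.div_eq_of_lt hp, Nat.add_zero]

theorem bundleCol_sub_mod {i p : ℕ} (hp : p < D.ρ) : (D.bundleCol i p - D.ℓ) % D.ρ = p := by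
  rw [bundleCol, Nat.add_sub_cancel_left, Nat.mul_comm, Nat.mul_add_mod, Nat.mod_eq_of_lt hp]

theorem exists_satN_eq_true {q : ℕ} (hq : q < D.s) (hne : (D.Clause ⟨q, hq⟩).Nonempty) :
    ∃ i < D.L, ∃ p < D.ρ, D.satN i p q = true := by
  obtain ⟨lit, hlit⟩ := hne
  obtain ⟨i, hi, -⟩ := D.hBpart lit.var
  obtain ⟨p, hp⟩ := D.hasg i fun _ => lit.pos
  refine ⟨i, i.isLt, p, p.isLt, ?_⟩
  rw [satN, dif_pos ⟨i.isLt, p.isLt, hq⟩, decide_eq_true_eq]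
  exact ⟨lit, hlit, hi, hp lit.var hi⟩

theorem exists_col_ne_of_code_ne {i j : ℕ} (hi : i < D.m) (hj : j < D.m)
    (hcode : D.code i ≠ D.code j) : ∃ c < D.n, D.A i c ≠ D.A j c := by
  obtain ⟨c, hc, hbit⟩ :=
    Nat.exists_testBit_ne_of_lt_two_pow (D.code_lt_two_pow hi) (D.code_lt_two_pow hj) hcode
  refine ⟨c, by unfold n; omega, ?_⟩
  rwa [D.A_of_lt_ℓ i hc, D.A_of_lt_ℓ j hc]

theorem exists_col_ne_of_lt_of_le_L {i j : ℕ} (hij : i < j) (hj : j ≤ D.L) :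
    ∃ c < D.n, D.A i c ≠ D.A j c := by
  have hρ := D.ρ_pos
  have hc : D.ℓ ≤ D.bundleCol (j - 1) 0 := Nat.le_add_right _ _
  refine ⟨D.bundleCol (j - 1) 0, D.bundleCol_lt_n (by omega) hρ, ?_⟩
  rw [D.A_of_le_L (by omega) hc, D.A_of_le_L hj hc, D.bundleCol_sub_div hρ]
  simp only [ne_eq, decide_eq_decide]
  omega

theorem exists_col_ne_odd_even {q : ℕ} (hq : q < D.s) (hne : (D.Clause ⟨q, hq⟩).Nonempty) :
    ∃ c < D.n, D.A (1 + D.L + 2 * q) c ≠ D.A (1 + D.L + 2 * q + 1) c := by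
  obtain ⟨i, hi, p, hp, hsat⟩ := D.exists_satN_eq_true hq hne
  have hc : D.ℓ ≤ D.bundleCol i p := Nat.le_add_right _ _
  refine ⟨D.bundleCol i p, D.bundleCol_lt_n hi hp, ?_⟩
  rw [D.A_odd_row q hc, D.A_even_row q hc, D.bundleCol_sub_div hp, D.bundleCol_sub_mod hp, hsat]
  decide

end DVInstance

/-- If every clause of `φ` contains at least one literal (and hence
is made true by at least one truth assignment), then all `m = 1 + log₂ r + 2s` rows of
the constructed matrix `A` are pairwise distinct, so `(A, k)` is a valid instance of
Distinct Vectors. -/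
theorem rows_pairwise_distinct (D : DVInstance)
    (hne : ∀ q : Fin D.s, (D.Clause q).Nonempty) :
    ∀ i j, i < D.m → j < D.m → i ≠ j → ∃ c, c < D.n ∧ D.A i c ≠ D.A j c := by
  intro i j hi hj hij
  wlog hlt : i < j generalizing i j
  · obtain ⟨c, hc, hA⟩ := this j i hj hi hij.symm (by omega)
    exact ⟨c, hc, hA.symm⟩
  by_cases hcode : D.code i = D.code j
  · by_cases hjL : j ≤ D.L
    · exact D.exists_col_ne_of_lt_of_le_L hlt hjL
    obtain ⟨q, rfl, rfl, hq⟩ : ∃ q, i = 1 + D.L + 2 * q ∧ j = 1 + D.L + 2 * q + 1 ∧ q < D.s := by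
      have hm : D.m = 1 + D.L + 2 * D.s := rfl
      unfold DVInstance.code at hcode
      split_ifs at hcode
      exact ⟨(i - D.L - 1) / 2, by omega, by omega, by omega⟩
    exact D.exists_col_ne_odd_even hq (hne ⟨q, hq⟩)
  · exact D.exists_col_ne_of_code_ne hi hj hcode
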